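/- arXiv:1406.5106 — 2 statements merged into one kernel-verified Lean document; each statement's English description precedes it below -/
import Mathlib

section
/- C(M) = lfp(F(M)): for every rooted pushdown system M, the compaction of M equals the least fixed point of the monotone iteration function F(M), started from the empty state and edge sets with root q₀. -/
/-!
A graph `X` with `F(M) X ≤ X` contains the root and every root-reachable successor of its
states, so by induction along a run from `(q₀, ⟨⟩)` it contains every reachable state, and then
every root-reachable edge. Conversely `C(M)` is itself such a graph, since a root-reachable step
ends in a reachable configuration. Hence `C(M)` is the least pre-fixed point of `F(M)`, which is
the Knaster–Tarski formula for its least fixed point.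
-/

/-! ### Pushdown systems: stack actions, configurations, transitions -/

/-- Stack actions `Γ±`: push a character, pop a character, or leave the stack unchanged. -/
inductive StackAct (Γ : Type*) where
  | push : Γ → StackAct Γ
  | pop  : Γ → StackAct Γ
  | eps  : StackAct Γ

/-- A rooted pushdown system `(Q, Γ, δ, q₀)`; `Q` and `Γ` are the (type-level) state
and stack spaces, `δ` the transition relation and `q₀` the initial control state. -/
structure RPDS (Q Γ : Type*) where
  δ : Q → StackAct Γ → Q → Prop
  q₀ : Q

/-- Configurations `Q × Γ*` of a pushdown system (head of the list = top of the stack). -/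
abbrev Cfg (Q Γ : Type*) := Q × List Γ

variable {Q Γ : Type*}

/-- The labeled transition relation between configurations. -/
inductive LStep (M : RPDS Q Γ) : Cfg Q Γ → StackAct Γ → Cfg Q Γ → Prop
  | eps {q q' : Q} {κ : List Γ} :
      M.δ q .eps q' → LStep M (q, κ) .eps (q', κ)
  | pop {q q' : Q} {γ : Γ} {κ : List Γ} :
      M.δ q (.pop γ) q' → LStep M (q, γ :: κ) (.pop γ) (q', κ)
  | push {q q' : Q} {γ : Γ} {κ : List Γ} :
      M.δ q (.push γ) q' → LStep M (q, κ) (.push γ) (q', γ :: κ)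

/-- The unlabeled transition relation: some stack action enables the transition. -/
def PStep (M : RPDS Q Γ) (c c' : Cfg Q Γ) : Prop := ∃ g, LStep M c g c'

/-- Multi-step transition `⟼*`. -/
def Reaches (M : RPDS Q Γ) : Cfg Q Γ → Cfg Q Γ → Prop :=
  Relation.ReflTransGen (PStep M)

/-- Root-reachable labeled transition between configurations:
`c ⟾^g c'` iff `(q₀, ⟨⟩) ⟼* c` and `c ⟼^g c'`. -/
def RootStep (M : RPDS Q Γ) (c : Cfg Q Γ) (g : StackAct Γ) (c' : Cfg Q Γ) : Prop :=
  Reaches M (M.q₀, []) c ∧ LStep M c g c'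

/-- Root-reachable labeled transition on control states. -/
def RootTransL (M : RPDS Q Γ) (q : Q) (g : StackAct Γ) (q' : Q) : Prop :=
  ∃ κ κ', RootStep M (q, κ) g (q', κ')

/-- Root-reachable transition on control states (some action). -/
def RootTrans (M : RPDS Q Γ) (q q' : Q) : Prop := ∃ g, RootTransL M q g q'

/-- The least fixed point of a function on a complete lattice
(the Knaster–Tarski formula). -/
def lfpOf {α : Type*} [CompleteLattice α] (f : α → α) : α := sInf {x | f x ≤ x}

/-- A "graph": a set of control states together with a set of labeled edges. -/
abbrev PGraph (Q Γ : Type*) := Set Q × Set (Q × StackAct Γ × Q)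

/-- The compaction `C(M)` of a rooted pushdown system: its states are the
root-reachable control states and its edges the root-reachable transitions. -/
def Compaction (M : RPDS Q Γ) : PGraph Q Γ :=
  ({q | ∃ κ, Reaches M (M.q₀, []) (q, κ)},
   {e | RootTransL M e.1 e.2.1 e.2.2})

/-- The iteration function `F(M)`: accrete the root-reachable successors of the
current states, the root, and the root-reachable edges out of current states. -/
def Fiter (M : RPDS Q Γ) (X : PGraph Q Γ) : PGraph Q Γ :=
  (X.1 ∪ {s' | ∃ s ∈ X.1, RootTrans M s s'} ∪ {M.q₀},
   X.2 ∪ {e | e.1 ∈ X.1 ∧ RootTransL M e.1 e.2.1 e.2.2})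

theorem RootStep.reaches_target {M : RPDS Q Γ} {c c' : Cfg Q Γ} {g : StackAct Γ}
    (h : RootStep M c g c') : Reaches M (M.q₀, []) c' :=
  h.1.tail ⟨g, h.2⟩

theorem monotone_fiter (M : RPDS Q Γ) : Monotone (Fiter M) := by
  rintro X Y ⟨hXY₁, hXY₂⟩
  constructor
  · rintro s ((hs | ⟨t, ht, hts⟩) | rfl)
    · exact Or.inl (Or.inl (hXY₁ hs))
    · exact Or.inl (Or.inr ⟨t, hXY₁ ht, hts⟩)
    · exact Or.inr rfl
  · rintro e (he | ⟨he₁, he₂⟩)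
    · exact Or.inl (hXY₂ he)
    · exact Or.inr ⟨hXY₁ he₁, he₂⟩

theorem fiter_compaction_le (M : RPDS Q Γ) : Fiter M (Compaction M) ≤ Compaction M := by
  constructor
  · rintro s ((hs | ⟨t, -, g, κ, κ', hstep⟩) | rfl)
    · exact hs
    · exact ⟨κ', hstep.reaches_target⟩
    · exact ⟨[], Relation.ReflTransGen.refl⟩
  · rintro e (he | ⟨-, he⟩) <;> exact he

theorem mem_of_fiter_le_of_reaches {M : RPDS Q Γ} {X : PGraph Q Γ} (hX : Fiter M X ≤ X)
    {c : Cfg Q Γ} (hc : Reaches M (M.q₀, []) c) : c.1 ∈ X.1 := by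
  induction hc with
  | refl => exact hX.1 (Or.inr rfl)
  | @tail b c' hb hstep ih =>
    obtain ⟨g, hg⟩ := hstep
    exact hX.1 (Or.inl (Or.inr ⟨b.1, ih, g, b.2, c'.2, hb, hg⟩))

theorem compaction_le_of_fiter_le {M : RPDS Q Γ} {X : PGraph Q Γ} (hX : Fiter M X ≤ X) :
    Compaction M ≤ X := by
  constructor
  · rintro q ⟨κ, hκ⟩
    exact mem_of_fiter_le_of_reaches hX hκ
  · rintro ⟨q, g, q'⟩ he
    obtain ⟨κ, κ', hstep⟩ := id he
    exact hX.2 (Or.inr ⟨mem_of_fiter_le_of_reaches hX hstep.1, he⟩)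

theorem isLeast_compaction (M : RPDS Q Γ) :
    IsLeast {X | Fiter M X ≤ X} (Compaction M) :=
  ⟨fiter_compaction_le M, fun _ hX => compaction_le_of_fiter_le hX⟩

/-- `C(M) = lfp(F(M))`: for every rooted pushdown system `M`,
the iteration function `F(M)` is monotone, and the compaction of `M` equals the
least fixed point of `F(M)` (i.e. the limit of iterating from the empty state
and edge sets with root `q₀`). -/
theorem compaction_eq_lfp (M : RPDS Q Γ) :
    Monotone (Fiter M) ∧ Compaction M = lfpOf (Fiter M) :=
  ⟨monotone_fiter M, (isLeast_compaction M).csInf_eq.symm⟩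
end

section
/- Completeness of the work-set iteration: let (G, H, (∅, ∅, ∅)) = lfp(F'(M)) for a rooted pushdown system M. For every trace π : (s₀, ⟨⟩) ⟼^{g⃗}* (s, κ) in M, the same labeled path from s₀ to s exists in the graph G, and for every non-empty balanced subtrace (s_b, κ') ⟼^{g⃗'}* (s_a, κ') of π (one whose action string g⃗' is non-empty and has net ε), the ε-edge (s_b, s_a) belongs to H. -/
variable {Q Γ : Type*}

/-! ### Action strings, net stack change, traces and the ε-closure graph -/

/-- One cancellation step of the net operator `⌊·⌋` on action strings:
delete an adjacent push-pop pair of the same character, or delete an `ε`. -/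
inductive NetStep {Γ : Type*} : List (StackAct Γ) → List (StackAct Γ) → Prop
  | cancel (l r : List (StackAct Γ)) (γ : Γ) :
      NetStep (l ++ StackAct.push γ :: StackAct.pop γ :: r) (l ++ r)
  | eps (l r : List (StackAct Γ)) :
      NetStep (l ++ StackAct.eps :: r) (l ++ r)

/-- An action string is balanced iff its net `⌊·⌋` is the empty string. -/
def BalancedActs {Γ : Type*} (gs : List (StackAct Γ)) : Prop :=
  Relation.ReflTransGen NetStep gs []

variable {Q Γ : Type*}

/-- Multi-step transition labeled with its string of stack actions:
`c ⟼^{g⃗}* c'`. -/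
inductive TraceN (M : RPDS Q Γ) : Cfg Q Γ → List (StackAct Γ) → Cfg Q Γ → Prop
  | refl (c : Cfg Q Γ) : TraceN M c [] c
  | tail {c : Cfg Q Γ} {gs : List (StackAct Γ)} {c' : Cfg Q Γ} {g : StackAct Γ} {c'' : Cfg Q Γ} :
      TraceN M c gs c' → LStep M c' g c'' → TraceN M c (gs ++ [g]) c''

/-- The ε-closure graph of `M`: pairs of control states connected, from a
root-reachable configuration, by a balanced string of stack actions. -/
def ECG (M : RPDS Q Γ) : Set (Q × Q) :=
  {p | ∃ gs κ κ', Reaches M (M.q₀, []) (p.1, κ) ∧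
      TraceN M (p.1, κ) gs (p.2, κ') ∧ BalancedActs gs}

/-! ### The ε-closure-graph work-set algorithm -/

/-- Labeled edges of the explicit transition graph. -/
abbrev PEdge (Q Γ : Type*) := Q × StackAct Γ × Q

/-- The iteration space of the work-set algorithm: a graph `(S, E)`,
an ε-closure graph `H`, and work-sets `ΔS`, `ΔE`, `ΔH`. -/
structure WState (Q Γ : Type*) where
  S : Set Q
  E : Set (PEdge Q Γ)
  H : Set (Q × Q)
  dS : Set Q
  dE : Set (PEdge Q Γ)
  dH : Set (Q × Q)

/-- Ancestors of a state in an ε-closure graph (ε-closure graphs are reflexive). -/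
def eAnc (H : Set (Q × Q)) (s : Q) : Set Q := {s' | (s', s) ∈ H} ∪ {s}

/-- Descendants of a state in an ε-closure graph. -/
def eDesc (H : Set (Q × Q)) (s : Q) : Set Q := {s' | (s, s') ∈ H} ∪ {s}

/-- `sprout`: push edges and ε-edges of `δ` out of a new state `s`
(ε-edges are also recorded in the ε-closure work-set). -/
def sprout (M : RPDS Q Γ) (s : Q) : Set (PEdge Q Γ) × Set (Q × Q) :=
  ({e | (∃ q, e = (s, StackAct.eps, q) ∧ M.δ s .eps q) ∨
        (∃ γ q, e = (s, StackAct.push γ, q) ∧ M.δ s (.push γ) q)},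
   {p | ∃ q, p = (s, q) ∧ M.δ s .eps q})

/-- `addPush`: consequences of a new push edge `(s, γ₊, q)`. -/
def addPush (M : RPDS Q Γ) (_E : Set (PEdge Q Γ)) (H : Set (Q × Q))
    (s : Q) (γ : Γ) (q : Q) : Set (PEdge Q Γ) × Set (Q × Q) :=
  ({e | ∃ q' q'', e = (q', StackAct.pop γ, q'') ∧ q' ∈ eDesc H q ∧ M.δ q' (.pop γ) q''},
   {p | ∃ q' q'', p = (s, q'') ∧ q' ∈ eDesc H q ∧ M.δ q' (.pop γ) q''})

/-- `addPop`: consequences of a new pop edge `(s'', γ₋, q)`. -/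
def addPop (_M : RPDS Q Γ) (E : Set (PEdge Q Γ)) (H : Set (Q × Q))
    (s'' : Q) (γ : Γ) (q : Q) : Set (PEdge Q Γ) × Set (Q × Q) :=
  (∅,
   {p | ∃ s s', p = (s, q) ∧ s' ∈ eAnc H s'' ∧ (s, StackAct.push γ, s') ∈ E})

/-- `addEmpty`: consequences of a new ε-edge `(s'', s''')`. -/
def addEmpty (M : RPDS Q Γ) (E : Set (PEdge Q Γ)) (H : Set (Q × Q))
    (s'' s''' : Q) : Set (PEdge Q Γ) × Set (Q × Q) :=
  ({e | ∃ s s' s'''' γ q, e = (s'''', StackAct.pop γ, q) ∧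
        s' ∈ eAnc H s'' ∧ s'''' ∈ eDesc H s''' ∧
        (s, StackAct.push γ, s') ∈ E ∧ M.δ s'''' (.pop γ) q},
   {p | ∃ s s' s'''' γ q, p = (s, q) ∧
        s' ∈ eAnc H s'' ∧ s'''' ∈ eDesc H s''' ∧
        (s, StackAct.push γ, s') ∈ E ∧ M.δ s'''' (.pop γ) q} ∪
   {p | ∃ s', p = (s', s''') ∧ s' ∈ eAnc H s''} ∪
   {p | ∃ s'''', p = (s'', s'''') ∧ s'''' ∈ eDesc H s'''} ∪
   {p | ∃ s' s'''', p = (s', s'''') ∧ s' ∈ eAnc H s'' ∧ s'''' ∈ eDesc H s'''})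

/-- One step of the ε-closure-graph work-set iteration function `F'(M)`. -/
def Fprime (M : RPDS Q Γ) (W : WState Q Γ) : WState Q Γ :=
  let dE0 : Set (PEdge Q Γ) := {e | ∃ s ∈ W.dS, e ∈ (sprout M s).1}
  let dH0 : Set (Q × Q)     := {p | ∃ s ∈ W.dS, p ∈ (sprout M s).2}
  let dE1 := {e | ∃ s γ s', (s, StackAct.push γ, s') ∈ W.dE ∧ e ∈ (addPush M W.E W.H s γ s').1}
  let dH1 := {p | ∃ s γ s', (s, StackAct.push γ, s') ∈ W.dE ∧ p ∈ (addPush M W.E W.H s γ s').2}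
  let dE2 := {e | ∃ s γ s', (s, StackAct.pop γ, s') ∈ W.dE ∧ e ∈ (addPop M W.E W.H s γ s').1}
  let dH2 := {p | ∃ s γ s', (s, StackAct.pop γ, s') ∈ W.dE ∧ p ∈ (addPop M W.E W.H s γ s').2}
  let dE3 := {e | ∃ s s', (s, StackAct.eps, s') ∈ W.dE ∧ e ∈ (addEmpty M W.E W.H s s').1}
  let dH3 := {p | ∃ s s', (s, StackAct.eps, s') ∈ W.dE ∧ p ∈ (addEmpty M W.E W.H s s').2}
  let dE4 := {e | ∃ s s', (s, s') ∈ W.dH ∧ e ∈ (addEmpty M W.E W.H s s').1}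
  let dH4 := {p | ∃ s s', (s, s') ∈ W.dH ∧ p ∈ (addEmpty M W.E W.H s s').2}
  let S' := W.S ∪ W.dS
  let E' := W.E ∪ W.dE
  let H' := W.H ∪ W.dH
  let dE' := dE0 ∪ dE1 ∪ dE2 ∪ dE3 ∪ dE4
  let dS' := {s' | ∃ s g, (s, g, s') ∈ dE'} ∪ {M.q₀}
  let dH' := dH0 ∪ dH1 ∪ dH2 ∪ dH3 ∪ dH4
  ⟨S', E', H', dS' \ S', dE' \ E', dH' \ W.H⟩

/-- The initial element of the iteration: empty graphs and work-sets. -/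
def initW : WState Q Γ := ⟨∅, ∅, ∅, ∅, ∅, ∅⟩

/-- Labeled paths through a set of graph edges. -/
inductive GraphPath (E : Set (PEdge Q Γ)) : Q → List (StackAct Γ) → Q → Prop
  | refl (q : Q) : GraphPath E q [] q
  | tail {q : Q} {gs : List (StackAct Γ)} {q' : Q} {g : StackAct Γ} {q'' : Q} :
      GraphPath E q gs q' → (q', g, q'') ∈ E → GraphPath E q (gs ++ [g]) q''

/-!
First, each round of `F'(M)` preserves the invariant that every
rule of the algorithm (sprouting, push–pop matching, transitivity of `H`) whose premises
have been processed has its conclusion known, i.e. in the graph or in a work-set. At a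
fixed point with empty work-sets, processed and known coincide, so `(S, E, H)` is closed
under the rules.

Second, along a trace above a base configuration `(b, κ₀)`, each character of the part of
the stack above `κ₀` is witnessed by a push edge of `E`, consecutive witnesses being linked
by `H` (a `PushChain`). A pop then meets the witness of the character it pops, and the
push–pop rule yields both the pop edge and the summary ε-edge that skips the pushed block.
-/

inductive StackRun : List Γ → List (StackAct Γ) → List Γ → Prop
  | nil (σ : List Γ) : StackRun σ [] σ
  | eps {σ σ' : List Γ} {gs : List (StackAct Γ)} :
      StackRun σ gs σ' → StackRun σ (.eps :: gs) σ'
  | push {σ σ' : List Γ} {gs : List (StackAct Γ)} (γ : Γ) :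
      StackRun (γ :: σ) gs σ' → StackRun σ (.push γ :: gs) σ'
  | pop {σ σ' : List Γ} {gs : List (StackAct Γ)} (γ : Γ) :
      StackRun σ gs σ' → StackRun (γ :: σ) (.pop γ :: gs) σ'

namespace StackRun

theorem append {σ σ' σ'' : List Γ} {l r : List (StackAct Γ)}
    (h : StackRun σ l σ') (h' : StackRun σ' r σ'') : StackRun σ (l ++ r) σ'' := by
  induction h with
  | nil => exact h'
  | eps _ ih => exact .eps (ih h')
  | push γ _ ih => exact .push γ (ih h')
  | pop γ _ ih => exact .pop γ (ih h')

theorem exists_of_append {σ σ'' : List Γ} {l r : List (StackAct Γ)}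
    (h : StackRun σ (l ++ r) σ'') : ∃ σ', StackRun σ l σ' ∧ StackRun σ' r σ'' := by
  induction l generalizing σ with
  | nil => exact ⟨σ, .nil σ, h⟩
  | cons g l ih =>
    cases h with
    | eps h => obtain ⟨σ', h₁, h₂⟩ := ih h; exact ⟨σ', .eps h₁, h₂⟩
    | push γ h => obtain ⟨σ', h₁, h₂⟩ := ih h; exact ⟨σ', .push γ h₁, h₂⟩
    | pop γ h => obtain ⟨σ', h₁, h₂⟩ := ih h; exact ⟨σ', .pop γ h₁, h₂⟩

end StackRun

theorem BalancedActs.stackRun {gs : List (StackAct Γ)} (h : BalancedActs gs) :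
    StackRun ([] : List Γ) gs [] := by
  induction h using Relation.ReflTransGen.head_induction_on with
  | refl => exact .nil []
  | head hstep _ ih =>
    cases hstep with
    | cancel l r γ =>
      obtain ⟨σ, hl, hr⟩ := ih.exists_of_append
      exact hl.append (.push γ (.pop γ hr))
    | eps l r =>
      obtain ⟨σ, hl, hr⟩ := ih.exists_of_append
      exact hl.append (.eps hr)

theorem TraceN.stackRun {M : RPDS Q Γ} {c c' : Cfg Q Γ} {gs : List (StackAct Γ)}
    (h : TraceN M c gs c') : StackRun c.2 gs c'.2 := by
  induction h with
  | refl => exact .nil _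
  | tail _ step ih =>
    refine ih.append ?_
    cases step with
    | eps _ => exact .eps (.nil _)
    | pop _ => exact .pop _ (.nil _)
    | push _ => exact .push _ (.nil _)

theorem mem_of_mem_eDesc {H : Set (Q × Q)}
    (htrans : ∀ {a b c}, (a, b) ∈ H → (b, c) ∈ H → (a, c) ∈ H) {x t s : Q}
    (ht : t ∈ eDesc H x) (hs : (t, s) ∈ H) : (x, s) ∈ H := by
  rcases ht with ht | rfl
  · exact htrans ht hs
  · exact hs

/-- The rules of the work-set algorithm, read with premises in `S`, `E`, `H` and conclusions
in `S'`, `E'`, `H'`. -/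
structure ClosedUnderRules (M : RPDS Q Γ) (S S' : Set Q) (E E' : Set (PEdge Q Γ))
    (H H' : Set (Q × Q)) : Prop where
  eps_mem : ∀ {s q}, s ∈ S → M.δ s .eps q → (s, .eps, q) ∈ E' ∧ (s, q) ∈ H'
  push_mem : ∀ {s γ q}, s ∈ S → M.δ s (.push γ) q → (s, .push γ, q) ∈ E'
  target_mem : ∀ {s g q}, (s, g, q) ∈ E' → q ∈ S'
  pop_mem : ∀ {s γ p m r}, (s, .push γ, p) ∈ E → m ∈ eDesc H p → M.δ m (.pop γ) r →
    (m, .pop γ, r) ∈ E' ∧ (s, r) ∈ H'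
  trans : ∀ {a b c}, (a, b) ∈ H → (b, c) ∈ H → (a, c) ∈ H'

inductive PushChain (E : Set (PEdge Q Γ)) (H : Set (Q × Q)) (b : Q) : List Γ → Q → Prop
  | nil : PushChain E H b [] b
  | cons {σ : List Γ} {x p p' : Q} {γ : Γ} :
      PushChain E H b σ x → p ∈ eDesc H x → (p, .push γ, p') ∈ E →
        PushChain E H b (γ :: σ) p'

theorem PushChain.eq_of_nil {E : Set (PEdge Q Γ)} {H : Set (Q × Q)} {b x : Q}
    (h : PushChain E H b [] x) : x = b := by
  cases h; rfl

namespace ClosedUnderRules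

variable {M : RPDS Q Γ} {S : Set Q} {E : Set (PEdge Q Γ)} {H : Set (Q × Q)}

theorem mem_of_graphPath {S' : Set Q} {E₀ E' : Set (PEdge Q Γ)} {H₀ H' : Set (Q × Q)}
    (hc : ClosedUnderRules M S S' E₀ E' H₀ H') {b s : Q} {gs : List (StackAct Γ)}
    (hb : b ∈ S') (h : GraphPath E' b gs s) : s ∈ S' := by
  cases h with
  | refl => exact hb
  | tail _ he => exact hc.target_mem he

theorem traceN_invariant (hc : ClosedUnderRules M S S E E H H) {b : Q} (hb : b ∈ S)
    {κ₀ : List Γ} {gs : List (StackAct Γ)} {c : Cfg Q Γ} (ht : TraceN M (b, κ₀) gs c) :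
    ∀ {σ : List Γ}, StackRun [] gs σ →
      c.2 = σ ++ κ₀ ∧ GraphPath E b gs c.1 ∧
      (∃ x, PushChain E H b σ x ∧ c.1 ∈ eDesc H x) ∧
      (gs ≠ [] → σ = [] → (b, c.1) ∈ H) := by
  induction ht with
  | refl =>
    intro σ hrun
    cases hrun
    exact ⟨rfl, .refl b, ⟨b, .nil, Or.inr rfl⟩, fun hne _ => absurd rfl hne⟩
  | tail _ step ih =>
    intro σ' hrun
    obtain ⟨σ, hrun, hlast⟩ := hrun.exists_of_append
    obtain ⟨hκ, hpath, ⟨x, hchain, hx⟩, -⟩ := ih hrun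
    have hS := hc.mem_of_graphPath hb hpath
    cases step with
    | eps hδ =>
      rcases hlast with _ | ⟨⟨⟩⟩
      obtain ⟨hE, hH⟩ := hc.eps_mem hS hδ
      have hxs := mem_of_mem_eDesc hc.trans hx hH
      refine ⟨hκ, hpath.tail hE, ⟨x, hchain, Or.inl hxs⟩, fun _ hσ => ?_⟩
      subst hσ
      rwa [← hchain.eq_of_nil]
    | push hδ =>
      rcases hlast with _ | _ | ⟨_, ⟨⟩⟩
      have hE := hc.push_mem hS hδ
      exact ⟨congrArg (List.cons _) hκ, hpath.tail hE, ⟨_, hchain.cons hx hE, Or.inr rfl⟩,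
        fun _ hσ => (List.cons_ne_nil _ _ hσ).elim⟩
    | pop hδ =>
      rcases hlast with _ | _ | _ | ⟨_, ⟨⟩⟩
      obtain _ | ⟨hchain', hp, hpush⟩ := hchain
      obtain ⟨hE, hH⟩ := hc.pop_mem hpush hx hδ
      have hys := mem_of_mem_eDesc hc.trans hp hH
      refine ⟨(List.cons.inj hκ).2, hpath.tail hE, ⟨_, hchain', Or.inl hys⟩,
        fun _ hσ => ?_⟩
      subst hσ
      rwa [← hchain'.eq_of_nil]

theorem graphPath_of_root (hc : ClosedUnderRules M S S E E H H) (h₀ : M.q₀ ∈ S)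
    {gs : List (StackAct Γ)} {s : Q} {κ : List Γ} (ht : TraceN M (M.q₀, []) gs (s, κ)) :
    GraphPath E M.q₀ gs s :=
  (hc.traceN_invariant h₀ ht ht.stackRun).2.1

theorem mem_of_balanced (hc : ClosedUnderRules M S S E E H H) {b s : Q} (hb : b ∈ S)
    {κ : List Γ} {gs : List (StackAct Γ)} (ht : TraceN M (b, κ) gs (s, κ)) (hne : gs ≠ [])
    (hbal : BalancedActs gs) : (b, s) ∈ H :=
  (hc.traceN_invariant hb ht hbal.stackRun).2.2.2 hne rfl

end ClosedUnderRules

namespace WState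

variable {M : RPDS Q Γ} {W : WState Q Γ}

/-- Processed items are `S`, `E` and `H \ dH`; known items also include the work-sets. A pair
of `dH` enters `H` after one round but is regenerated by `addEmpty`, so it counts as processed
only once it has left `dH`. -/
def Invariant (M : RPDS Q Γ) (W : WState Q Γ) : Prop :=
  ClosedUnderRules M W.S (W.S ∪ W.dS) W.E (W.E ∪ W.dE) (W.H \ W.dH) (W.H ∪ W.dH)

theorem invariant_initW : (initW : WState Q Γ).Invariant M := by
  constructor <;> simp [initW]

theorem fprime_H_diff_dH_subset : (Fprime M W).H \ (Fprime M W).dH ⊆ W.H := by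
  rintro ⟨a, b⟩ ⟨hab | hab, hnew⟩
  · exact hab
  · by_contra hH
    exact hnew ⟨.inr ⟨a, b, hab, .inl (.inr ⟨b, rfl, .inr rfl⟩)⟩, hH⟩

theorem mem_fprime_E_of_sprout {s : Q} {e : PEdge Q Γ} (hs : s ∈ W.dS)
    (he : e ∈ (sprout M s).1) : e ∈ (Fprime M W).E ∪ (Fprime M W).dE := by
  by_cases hk : e ∈ W.E ∪ W.dE
  · exact .inl hk
  · exact .inr ⟨.inl (.inl (.inl (.inl ⟨s, hs, he⟩))), hk⟩

theorem mem_fprime_H_of_sprout {s : Q} {p : Q × Q} (hs : s ∈ W.dS)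
    (hp : p ∈ (sprout M s).2) : p ∈ (Fprime M W).H ∪ (Fprime M W).dH := by
  by_cases hk : p ∈ W.H
  · exact .inl (.inl hk)
  · exact .inr ⟨.inl (.inl (.inl (.inl ⟨s, hs, hp⟩))), hk⟩

theorem mem_fprime_E_of_addPush {s s' : Q} {γ : Γ} {e : PEdge Q Γ}
    (hs : (s, .push γ, s') ∈ W.dE) (he : e ∈ (addPush M W.E W.H s γ s').1) :
    e ∈ (Fprime M W).E ∪ (Fprime M W).dE := by
  by_cases hk : e ∈ W.E ∪ W.dE
  · exact .inl hk
  · exact .inr ⟨.inl (.inl (.inl (.inr ⟨s, γ, s', hs, he⟩))), hk⟩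

theorem mem_fprime_H_of_addPush {s s' : Q} {γ : Γ} {p : Q × Q}
    (hs : (s, .push γ, s') ∈ W.dE) (hp : p ∈ (addPush M W.E W.H s γ s').2) :
    p ∈ (Fprime M W).H ∪ (Fprime M W).dH := by
  by_cases hk : p ∈ W.H
  · exact .inl (.inl hk)
  · exact .inr ⟨.inl (.inl (.inl (.inr ⟨s, γ, s', hs, hp⟩))), hk⟩

theorem mem_fprime_E_of_addEmpty {a b : Q} {e : PEdge Q Γ} (hab : (a, b) ∈ W.dH)
    (he : e ∈ (addEmpty M W.E W.H a b).1) : e ∈ (Fprime M W).E ∪ (Fprime M W).dE := by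
  by_cases hk : e ∈ W.E ∪ W.dE
  · exact .inl hk
  · exact .inr ⟨.inr ⟨a, b, hab, he⟩, hk⟩

theorem mem_fprime_H_of_addEmpty {a b : Q} {p : Q × Q} (hab : (a, b) ∈ W.dH)
    (hp : p ∈ (addEmpty M W.E W.H a b).2) : p ∈ (Fprime M W).H ∪ (Fprime M W).dH := by
  by_cases hk : p ∈ W.H
  · exact .inl (.inl hk)
  · exact .inr ⟨.inr ⟨a, b, hab, hp⟩, hk⟩

theorem Invariant.fprime (h : W.Invariant M) : (Fprime M W).Invariant M where
  eps_mem {s q} hs hδ := by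
    rcases hs with hs | hs
    · exact ⟨.inl (h.eps_mem hs hδ).1, .inl (h.eps_mem hs hδ).2⟩
    · exact ⟨mem_fprime_E_of_sprout hs (.inl ⟨q, rfl, hδ⟩),
        mem_fprime_H_of_sprout hs ⟨q, rfl, hδ⟩⟩
  push_mem {s γ q} hs hδ := by
    rcases hs with hs | hs
    · exact .inl (h.push_mem hs hδ)
    · exact mem_fprime_E_of_sprout hs (.inr ⟨γ, q, rfl, hδ⟩)
  target_mem {s g q} he := by
    rcases he with he | ⟨hgen, -⟩
    · exact .inl (h.target_mem he)
    · by_cases hq : q ∈ (Fprime M W).S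
      · exact .inl hq
      · exact .inr ⟨.inl ⟨s, g, hgen⟩, hq⟩
  pop_mem {s γ p m r} hpush hm hδ := by
    have hm : m ∈ eDesc W.H p := hm.imp_left fun hpm => fprime_H_diff_dH_subset hpm
    rcases hpush with hpush | hpush
    · by_cases hpm : (p, m) ∈ W.dH
      · exact ⟨mem_fprime_E_of_addEmpty hpm
            ⟨s, p, m, γ, r, rfl, .inr rfl, .inr rfl, hpush, hδ⟩,
          mem_fprime_H_of_addEmpty hpm
            (.inl (.inl (.inl ⟨s, p, m, γ, r, rfl, .inr rfl, .inr rfl, hpush, hδ⟩)))⟩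
      · obtain ⟨hE, hH⟩ := h.pop_mem hpush (hm.imp_left fun hpm' => ⟨hpm', hpm⟩) hδ
        exact ⟨.inl hE, .inl hH⟩
    · exact ⟨mem_fprime_E_of_addPush hpush ⟨m, r, rfl, hm, hδ⟩,
        mem_fprime_H_of_addPush hpush ⟨m, r, rfl, hm, hδ⟩⟩
  trans {a b c} hab hbc := by
    have hab' := fprime_H_diff_dH_subset hab
    have hbc' := fprime_H_diff_dH_subset hbc
    by_cases h₁ : (a, b) ∈ W.dH
    · exact mem_fprime_H_of_addEmpty h₁ (.inr ⟨a, c, rfl, .inr rfl, .inl hbc'⟩)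
    by_cases h₂ : (b, c) ∈ W.dH
    · exact mem_fprime_H_of_addEmpty h₂ (.inl (.inl (.inr ⟨a, rfl, .inl hab'⟩)))
    exact .inl (h.trans ⟨hab', h₁⟩ ⟨hbc', h₂⟩)

theorem invariant_iterate (n : ℕ) : ((Fprime M)^[n] initW).Invariant M := by
  induction n with
  | zero => exact invariant_initW
  | succ n ih => rw [Function.iterate_succ_apply']; exact ih.fprime

theorem Invariant.closedUnderRules (h : W.Invariant M) (hdS : W.dS = ∅) (hdE : W.dE = ∅)
    (hdH : W.dH = ∅) : ClosedUnderRules M W.S W.S W.E W.E W.H W.H := by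
  simpa only [Invariant, hdS, hdE, hdH, Set.union_empty, Set.sdiff_empty] using h

theorem q₀_mem_of_isFixedPt (hfix : Function.IsFixedPt (Fprime M) W) (hdS : W.dS = ∅) :
    M.q₀ ∈ W.S := by
  by_contra hq
  have hnew : M.q₀ ∈ (Fprime M W).dS := ⟨.inr rfl, by simpa [hdS] using hq⟩
  rw [hfix, hdS] at hnew
  exact hnew

end WState

/-- completeness of the work-set iteration: let
`(G, H, (∅, ∅, ∅)) = lfp(F'(M))` — a fixed point of `F'(M)` with empty
work-sets reached by iterating from the empty start.  For every trace
`π : (s₀, ⟨⟩) ⟼^{g⃗}* (s, κ)` in `M`, the same labeled path from `s₀` to `s`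
exists in the graph `G`, and for every non-empty balanced subtrace
`(s_b, κ') ⟼^{g⃗'}* (s_a, κ')` of `π` (one whose action string `g⃗'` is
non-empty and has net `ε`), the ε-edge `(s_b, s_a)` belongs to `H`. -/
theorem worklist_complete (M : RPDS Q Γ) (W : WState Q Γ)
    (hiter : ∃ n, (Fprime M)^[n] initW = W)
    (hfix : Function.IsFixedPt (Fprime M) W)
    (hdS : W.dS = ∅) (hdE : W.dE = ∅) (hdH : W.dH = ∅) :
    ∀ (gs : List (StackAct Γ)) (s : Q) (κ : List Γ),
      TraceN M (M.q₀, []) gs (s, κ) →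
      GraphPath W.E M.q₀ gs s ∧
      (∀ (gs₁ gs' gs₂ : List (StackAct Γ)) (sb sa : Q) (κ' : List Γ),
        gs = gs₁ ++ gs' ++ gs₂ →
        TraceN M (M.q₀, []) gs₁ (sb, κ') →
        TraceN M (sb, κ') gs' (sa, κ') →
        TraceN M (sa, κ') gs₂ (s, κ) →
        gs' ≠ [] → BalancedActs gs' → (sb, sa) ∈ W.H) := by
  obtain ⟨n, rfl⟩ := hiter
  have hc := (WState.invariant_iterate n).closedUnderRules hdS hdE hdH
  have h₀ := WState.q₀_mem_of_isFixedPt hfix hdS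
  intro gs s κ ht
  refine ⟨hc.graphPath_of_root h₀ ht, ?_⟩
  intro gs₁ gs' gs₂ sb sa κ' _ hprefix hmid _ hne hbal
  exact hc.mem_of_balanced (hc.mem_of_graphPath h₀ (hc.graphPath_of_root h₀ hprefix))
    hmid hne hbal
end
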